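/- arXiv:2405.12655 — 2 statements merged into one kernel-verified Lean document; each statement's English description precedes it below -/
import Mathlib

section
/- Let f : E → ℝ be Lipschitz with constant L ≥ 0 and let x ∈ E. Then Γf(x) = 0 if and only if x is Clarke-critical for f, i.e. 0 ∈ ∂f(x). -/
open Filter Topology Metric Set
open scoped Classical

variable {E : Type*} [NormedAddCommGroup E] [InnerProductSpace ℝ E] [FiniteDimensional ℝ E]

/-- The Clarke subdifferential: the closed convex hull of all limits of gradients
along sequences of points of differentiability converging to `x`. -/
noncomputable def clarkeSubdiff (f : E → ℝ) (x : E) : Set E :=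
  closure (convexHull ℝ {v : E | ∃ u : ℕ → E,
    (∀ n, DifferentiableAt ℝ f (u n)) ∧
    Tendsto u atTop (𝓝 x) ∧
    Tendsto (fun n => gradient f (u n)) atTop (𝓝 v)})

/-- The Goldstein subdifferential of radius `ε`. -/
noncomputable def goldsteinSubdiff (f : E → ℝ) (x : E) (ε : ℝ) : Set E :=
  convexHull ℝ (⋃ y ∈ Metric.closedBall x ε, clarkeSubdiff f y)

/-- The element of minimal norm of a set (junk value `0` if no minimizer exists). -/
noncomputable def minNorm (s : Set E) : E :=
  if h : ∃ v, v ∈ s ∧ ∀ w ∈ s, ‖v‖ ≤ ‖w‖ then h.choose else 0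

/-- The Goldstein subgradient: the minimal-norm element of the Goldstein subdifferential. -/
noncomputable def goldsteinGrad (f : E → ℝ) (x : E) (ε : ℝ) : E :=
  minNorm (goldsteinSubdiff f x ε)

/-- The Goldstein modulus `Γf(x) = inf {ε ≥ 0 : ‖g_ε(x)‖ ≤ ε}`. -/
noncomputable def goldsteinModulus (f : E → ℝ) (x : E) : ℝ :=
  sInf {ε : ℝ | 0 ≤ ε ∧ ‖goldsteinGrad f x ε‖ ≤ ε}

/-! For Lipschitz `f`, the Clarke subdifferential `∂f(x)` is the convex hull of the compact set
`∂_B f(x)` of limiting gradients, and the limiting gradients form a closed, locally bounded graph.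
A separation argument then gives `∂f(x) = ⋂_{δ > 0} ∂_δ f(x)`. If `Γf(x) = 0` there are radii
`ε → 0` with `‖g_ε(x)‖ ≤ ε` and `g_ε(x) ∈ ∂_ε f(x)`, so `0` lies in each of the closed, increasing
sets `∂_δ f(x)`, hence in `∂f(x)`. Conversely, `0 ∈ ∂f(x) ⊆ ∂_0 f(x)` forces `g_0(x) = 0`. -/

open MeasureTheory

section General

variable {F : Type*} [NormedAddCommGroup F]

theorem isCompact_convexHull [NormedSpace ℝ F] [FiniteDimensional ℝ F] {s : Set F}
    (hs : IsCompact s) : IsCompact (convexHull ℝ s) := by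
  -- Carathéodory: every point of `convexHull ℝ s` is a convex combination of at most
  -- `finrank ℝ F + 1` points of `s`.
  have hcar : convexHull ℝ s = ⋃ m ∈ Finset.range (Module.finrank ℝ F + 2),
      (fun p : (Fin m → ℝ) × (Fin m → F) => ∑ i, p.1 i • p.2 i) ''
        (stdSimplex ℝ (Fin m) ×ˢ univ.pi fun _ => s) := by
    refine Subset.antisymm (fun x hx => ?_) (iUnion₂_subset fun m _ => ?_)
    · obtain ⟨ι, _, z, w, hzs, hai, hw0, hw1, rfl⟩ := eq_pos_convex_span_of_mem_convexHull hx
      have hcard : Fintype.card ι < Module.finrank ℝ F + 2 := by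
        have := hai.card_le_finrank_succ
        have := Submodule.finrank_le (vectorSpan ℝ (range z))
        omega
      let e := Fintype.equivFin ι
      refine mem_iUnion₂.2 ⟨_, Finset.mem_range.2 hcard, (w ∘ e.symm, z ∘ e.symm),
        ⟨⟨fun i => (hw0 _).le, ?_⟩, fun i _ => hzs ⟨_, rfl⟩⟩, ?_⟩
      · simpa [e.symm.sum_comp w] using hw1
      · exact e.symm.sum_comp fun i => w i • z i
    · rintro _ ⟨⟨w, z⟩, ⟨hw, hz⟩, rfl⟩
      exact (convex_convexHull ℝ s).sum_mem (fun i _ => hw.1 i) hw.2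
        fun i _ => subset_convexHull ℝ s (hz i (mem_univ i))
  rw [hcar]
  exact (Finset.range _).isCompact_biUnion fun m _ =>
    ((isCompact_stdSimplex _ _).prod (isCompact_univ_pi fun _ => hs)).image (by fun_prop)

variable [InnerProductSpace ℝ F] [CompleteSpace F] {f : F → ℝ}

theorem LipschitzWith.norm_gradient_le {K : NNReal} (hf : LipschitzWith K f) (y : F) :
    ‖gradient f y‖ ≤ K := by
  rw [gradient, LinearIsometryEquiv.norm_map]
  exact norm_fderiv_le_of_lipschitz ℝ hf

/-- The closure of the graph of `∇f` over the points of differentiability; its fibre over `x`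
is the Bouligand subdifferential `∂_B f(x)` of all limits of gradients at points tending to `x`. -/
def bouligandGraph (f : F → ℝ) : Set (F × F) :=
  closure ((fun p => (p, gradient f p)) '' {p | DifferentiableAt ℝ f p})

def bouligandSubdiff (f : F → ℝ) (x : F) : Set F := Prod.mk x ⁻¹' bouligandGraph f

theorem gradient_mem_bouligandSubdiff {y : F} (hy : DifferentiableAt ℝ f y) :
    gradient f y ∈ bouligandSubdiff f y :=
  subset_closure ⟨y, hy, rfl⟩

theorem bouligandGraph_subset {K : NNReal} (hf : LipschitzWith K f) :
    bouligandGraph f ⊆ univ ×ˢ closedBall 0 K :=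
  closure_minimal (by rintro _ ⟨p, -, rfl⟩; simpa using hf.norm_gradient_le p)
    (isClosed_univ.prod isClosed_closedBall)

theorem bouligandSubdiff_subset_closedBall {K : NNReal} (hf : LipschitzWith K f) (x : F) :
    bouligandSubdiff f x ⊆ closedBall 0 K :=
  fun _ hv => (bouligandGraph_subset hf hv).2

theorem setOf_tendsto_gradient_eq_bouligandSubdiff (x : F) :
    {v : F | ∃ u : ℕ → F, (∀ n, DifferentiableAt ℝ f (u n)) ∧
      Tendsto u atTop (𝓝 x) ∧ Tendsto (fun n => gradient f (u n)) atTop (𝓝 v)} =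
      bouligandSubdiff f x := by
  ext v
  simp only [bouligandSubdiff, bouligandGraph, mem_preimage, mem_ofPred_eq,
    mem_closure_iff_seq_limit, mem_image]
  constructor
  · rintro ⟨u, hdiff, hu, hgrad⟩
    exact ⟨fun n => (u n, gradient f (u n)), fun n => ⟨u n, hdiff n, rfl⟩, hu.prodMk_nhds hgrad⟩
  · rintro ⟨q, hq, hlim⟩
    choose u hdiff hqu using hq
    refine ⟨u, hdiff, ?_, ?_⟩
    · simpa [← hqu] using hlim.fst_nhds
    · simpa [← hqu] using hlim.snd_nhds

end General

theorem goldsteinSubdiff_mono (f : E → ℝ) (x : E) {ε δ : ℝ} (h : ε ≤ δ) :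
    goldsteinSubdiff f x ε ⊆ goldsteinSubdiff f x δ :=
  convexHull_mono (biUnion_subset_biUnion_left (closedBall_subset_closedBall h))

omit [InnerProductSpace ℝ E] [FiniteDimensional ℝ E] in
theorem norm_minNorm_le {s : Set E} {w : E} (hw : w ∈ s) : ‖minNorm s‖ ≤ ‖w‖ := by
  rw [minNorm]
  split_ifs with h
  · exact h.choose_spec.2 w hw
  · simp

omit [InnerProductSpace ℝ E] [FiniteDimensional ℝ E] in
theorem minNorm_mem {s : Set E} (hc : IsCompact s) (hne : s.Nonempty) : minNorm s ∈ s := by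
  obtain ⟨v, hv, hmin⟩ := hc.exists_isMinOn hne continuous_norm.continuousOn
  have h : ∃ v ∈ s, ∀ w ∈ s, ‖v‖ ≤ ‖w‖ := ⟨v, hv, fun w hw => hmin hw⟩
  rw [minNorm, dif_pos h]
  exact h.choose_spec.1

section Lipschitz

variable {f : E → ℝ} {K : NNReal} (hf : LipschitzWith K f) (x : E)
include hf

theorem isCompact_bouligandSubdiff : IsCompact (bouligandSubdiff f x) :=
  (isCompact_closedBall 0 K).of_isClosed_subset (isClosed_closure.preimage (by fun_prop))
    (bouligandSubdiff_subset_closedBall hf x)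

theorem exists_mem_bouligandSubdiff_tendsto_subseq {y a : ℕ → E} (hy : Tendsto y atTop (𝓝 x))
    (ha : ∀ k, a k ∈ bouligandSubdiff f (y k)) :
    ∃ a₀ ∈ bouligandSubdiff f x, ∃ φ : ℕ → ℕ, StrictMono φ ∧ Tendsto (a ∘ φ) atTop (𝓝 a₀) := by
  obtain ⟨a₀, -, φ, hφ, hlim⟩ :=
    tendsto_subseq_of_bounded isBounded_closedBall fun k =>
      bouligandSubdiff_subset_closedBall hf _ (ha k)
  exact ⟨a₀, isClosed_closure.mem_of_tendsto ((hy.comp hφ.tendsto_atTop).prodMk_nhds hlim)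
    (Eventually.of_forall fun k => ha (φ k)), φ, hφ, hlim⟩

theorem bouligandSubdiff_nonempty : (bouligandSubdiff f x).Nonempty := by
  borelize E
  have hdense : Dense {p | DifferentiableAt ℝ f p} :=
    Measure.dense_of_ae (hf.ae_differentiableAt (μ := Measure.addHaar))
  obtain ⟨u, hdiff, hu⟩ := mem_closure_iff_seq_limit.1 (hdense x)
  obtain ⟨a₀, ha₀, -⟩ := exists_mem_bouligandSubdiff_tendsto_subseq hf x hu
    fun k => gradient_mem_bouligandSubdiff (hdiff k)
  exact ⟨a₀, ha₀⟩

theorem clarkeSubdiff_eq_convexHull : clarkeSubdiff f x = convexHull ℝ (bouligandSubdiff f x) := by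
  rw [clarkeSubdiff, setOf_tendsto_gradient_eq_bouligandSubdiff]
  exact (isCompact_convexHull (isCompact_bouligandSubdiff hf x)).isClosed.closure_eq

theorem isCompact_biUnion_bouligandSubdiff (ε : ℝ) :
    IsCompact (⋃ y ∈ closedBall x ε, bouligandSubdiff f y) := by
  have himage : ⋃ y ∈ closedBall x ε, bouligandSubdiff f y =
      Prod.snd '' (bouligandGraph f ∩ closedBall x ε ×ˢ closedBall 0 K) := by
    ext v
    simp only [mem_iUnion₂, mem_image, mem_inter_iff, mem_prod, Prod.exists]
    constructor
    · rintro ⟨y, hy, hv⟩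
      exact ⟨y, v, ⟨hv, hy, bouligandSubdiff_subset_closedBall hf y hv⟩, rfl⟩
    · rintro ⟨y, _, ⟨hv, hy, -⟩, rfl⟩
      exact ⟨y, hy, hv⟩
  rw [himage]
  exact (((isCompact_closedBall x ε).prod (isCompact_closedBall 0 K)).inter_left
    isClosed_closure).image continuous_snd

theorem goldsteinSubdiff_eq_convexHull (ε : ℝ) :
    goldsteinSubdiff f x ε = convexHull ℝ (⋃ y ∈ closedBall x ε, bouligandSubdiff f y) := by
  simp_rw [goldsteinSubdiff, clarkeSubdiff_eq_convexHull hf]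
  refine Subset.antisymm ?_ (convexHull_mono (iUnion₂_mono fun y _ => subset_convexHull ℝ _))
  exact convexHull_min (iUnion₂_subset fun y hy => convexHull_mono (subset_biUnion_of_mem hy))
    (convex_convexHull ℝ _)

theorem isCompact_goldsteinSubdiff (ε : ℝ) : IsCompact (goldsteinSubdiff f x ε) := by
  rw [goldsteinSubdiff_eq_convexHull hf]
  exact isCompact_convexHull (isCompact_biUnion_bouligandSubdiff hf x ε)

theorem goldsteinSubdiff_subset_closedBall (ε : ℝ) : goldsteinSubdiff f x ε ⊆ closedBall 0 K := by
  rw [goldsteinSubdiff_eq_convexHull hf]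
  exact convexHull_min (iUnion₂_subset fun y _ => bouligandSubdiff_subset_closedBall hf y)
    (convex_closedBall 0 K)

theorem goldsteinSubdiff_nonempty {ε : ℝ} (hε : 0 ≤ ε) : (goldsteinSubdiff f x ε).Nonempty := by
  obtain ⟨v, hv⟩ := bouligandSubdiff_nonempty hf x
  rw [goldsteinSubdiff_eq_convexHull hf]
  exact ⟨v, subset_convexHull ℝ _ (mem_iUnion₂.2 ⟨x, mem_closedBall_self hε, hv⟩)⟩

variable {x}

theorem goldsteinGrad_mem {ε : ℝ} (hε : 0 ≤ ε) : goldsteinGrad f x ε ∈ goldsteinSubdiff f x ε :=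
  minNorm_mem (isCompact_goldsteinSubdiff hf x ε) (goldsteinSubdiff_nonempty hf x hε)

theorem mem_clarkeSubdiff_of_forall_mem_goldsteinSubdiff {v : E}
    (h : ∀ δ > 0, v ∈ goldsteinSubdiff f x δ) : v ∈ clarkeSubdiff f x := by
  rw [clarkeSubdiff_eq_convexHull hf]
  -- Separate `v` from `∂f(x)` by `ℓ`; near `x` there are limiting gradients on which `ℓ > u`,
  -- and they accumulate at a limiting gradient at `x`.
  by_contra hv
  obtain ⟨ℓ, u, hℓ, hu⟩ := geometric_hahn_banach_closed_point (convex_convexHull ℝ _)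
    (isCompact_convexHull (isCompact_bouligandSubdiff hf x)).isClosed hv
  have hfar : ∀ k : ℕ, ∃ y ∈ closedBall x (1 / (k + 1)), ∃ a ∈ bouligandSubdiff f y, u < ℓ a := by
    intro k
    have hvk := h (1 / (k + 1)) Nat.one_div_pos_of_nat
    rw [goldsteinSubdiff_eq_convexHull hf] at hvk
    obtain ⟨a, ha, hva⟩ :=
      (ℓ.toLinearMap.convexOn convex_univ).exists_ge_of_mem_convexHull (subset_univ _) hvk
    obtain ⟨y, hy, hay⟩ := mem_iUnion₂.1 ha
    exact ⟨y, hy, a, hay, hu.trans_le hva⟩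
  choose y hy a ha hua using hfar
  have hyx : Tendsto y atTop (𝓝 x) := tendsto_iff_dist_tendsto_zero.2 <|
    squeeze_zero (fun _ => dist_nonneg) hy tendsto_one_div_add_atTop_nhds_zero_nat
  obtain ⟨a₀, ha₀, φ, -, hφ⟩ := exists_mem_bouligandSubdiff_tendsto_subseq hf x hyx ha
  exact (hℓ a₀ (subset_convexHull ℝ _ ha₀)).not_ge <|
    ge_of_tendsto ((ℓ.continuous.tendsto a₀).comp hφ) (Eventually.of_forall fun k => (hua _).le)

theorem zero_mem_goldsteinSubdiff_of_goldsteinModulus_eq_zero (h : goldsteinModulus f x = 0)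
    {δ : ℝ} (hδ : 0 < δ) : 0 ∈ goldsteinSubdiff f x δ := by
  have hK : (K : ℝ) ∈ {ε : ℝ | 0 ≤ ε ∧ ‖goldsteinGrad f x ε‖ ≤ ε} :=
    ⟨K.2, mem_closedBall_zero_iff.1
      (goldsteinSubdiff_subset_closedBall hf x K (goldsteinGrad_mem hf K.2))⟩
  refine (isCompact_goldsteinSubdiff hf x δ).isClosed.closure_subset
    (Metric.mem_closure_iff.2 fun η hη => ?_)
  have hlt : goldsteinModulus f x < min δ η := h ▸ lt_min hδ hη
  obtain ⟨ε, ⟨hε, hgε⟩, hεlt⟩ := exists_lt_of_csInf_lt ⟨_, hK⟩ hlt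
  refine ⟨goldsteinGrad f x ε, goldsteinSubdiff_mono f x (hεlt.le.trans (min_le_left _ _))
    (goldsteinGrad_mem hf hε), ?_⟩
  rw [dist_zero_left]
  exact hgε.trans_lt (hεlt.trans_le (min_le_right _ _))

end Lipschitz

theorem goldsteinModulus_eq_zero_of_zero_mem_clarkeSubdiff {f : E → ℝ} {x : E}
    (h : 0 ∈ clarkeSubdiff f x) : goldsteinModulus f x = 0 := by
  have h₀ : (0 : E) ∈ goldsteinSubdiff f x 0 :=
    subset_convexHull ℝ _ (mem_iUnion₂.2 ⟨x, mem_closedBall_self le_rfl, h⟩)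
  have hS : (0 : ℝ) ∈ {ε : ℝ | 0 ≤ ε ∧ ‖goldsteinGrad f x ε‖ ≤ ε} :=
    ⟨le_rfl, (norm_minNorm_le h₀).trans_eq norm_zero⟩
  exact le_antisymm (csInf_le ⟨0, fun ε hε => hε.1⟩ hS) (Real.sInf_nonneg fun ε hε => hε.1)

theorem stmt3_general (f : E → ℝ) (L : ℝ) (hf : LipschitzWith L.toNNReal f) (x : E) :
    goldsteinModulus f x = 0 ↔ (0 : E) ∈ clarkeSubdiff f x :=
  ⟨fun h => mem_clarkeSubdiff_of_forall_mem_goldsteinSubdiff hf fun _ hδ =>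
      zero_mem_goldsteinSubdiff_of_goldsteinModulus_eq_zero hf h hδ,
    goldsteinModulus_eq_zero_of_zero_mem_clarkeSubdiff⟩

theorem stmt3 (f : E → ℝ) (L : ℝ) (hL : 0 ≤ L) (hf : LipschitzWith L.toNNReal f) (x : E) :
    goldsteinModulus f x = 0 ↔ (0 : E) ∈ clarkeSubdiff f x :=
  stmt3_general f L hf x
end

section
/- Let f : E → ℝ be Lipschitz with constant L ≥ 0, let x ∈ E and ε > 0, and suppose the Goldstein subgradient g := g_ε(x) is nonzero. Then the Goldstein update x⁺ := x − (ε/‖g‖)·g satisfies the descent property f(x⁺) ≤ f(x) − ε‖g‖. -/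
open Filter Topology Metric Set
open scoped Classical

variable {E : Type*} [NormedAddCommGroup E] [InnerProductSpace ℝ E] [FiniteDimensional ℝ E]

/-!
Wherever `f` is differentiable in the closed `ε`-ball around `x`, its gradient lies in the
Goldstein subdifferential, so the variational inequality of the minimal-norm element `g` gives
`⟪g, ∇f y⟫ ≥ ‖g‖²`: the derivative of `f` in the direction `d = -(ε / ‖g‖) • g` is at most
`-ε ‖g‖` at every such point. For a Lipschitz function this bound integrates along the segment
from `x` to `x + d`. The segment itself may lie in the null set where `f` is not differentiable,
so one averages `f` over translates by a small ball, where Rademacher's theorem applies, and then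
lets the radius shrink.
-/

open MeasureTheory ProbabilityTheory
open scoped NNReal RealInnerProductSpace

section MinNorm

variable {F : Type*} [NormedAddCommGroup F]

theorem minNorm_mem_and_norm_le {s : Set F} (h : minNorm s ≠ 0) :
    minNorm s ∈ s ∧ ∀ w ∈ s, ‖minNorm s‖ ≤ ‖w‖ := by
  rw [minNorm] at h ⊢
  split_ifs at h ⊢ with hex
  · exact hex.choose_spec
  · exact absurd rfl h

variable [InnerProductSpace ℝ F]

theorem sq_norm_le_inner_of_forall_norm_le {s : Set F} (hs : Convex ℝ s) {g : F} (hg : g ∈ s)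
    (hmin : ∀ w ∈ s, ‖g‖ ≤ ‖w‖) {v : F} (hv : v ∈ s) : ‖g‖ ^ 2 ≤ ⟪g, v⟫ := by
  have : Nonempty s := ⟨⟨g, hg⟩⟩
  have hinf : ‖0 - g‖ = ⨅ w : s, ‖0 - (w : F)‖ := by
    simp only [zero_sub, norm_neg]
    exact le_antisymm (le_ciInf fun w => hmin w w.2)
      (ciInf_le (show BddBelow (range fun w : s => ‖(w : F)‖) from
        ⟨0, forall_mem_range.2 fun _ => norm_nonneg _⟩) ⟨g, hg⟩)
  have := (norm_eq_iInf_iff_real_inner_le_zero hs hg).1 hinf v hv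
  rw [zero_sub, inner_neg_left, inner_sub_right, real_inner_self_eq_norm_sq] at this
  linarith

end MinNorm

section Smoothing

variable {F : Type*} [NormedAddCommGroup F] {f : F → ℝ} {K : ℝ≥0}

theorem LipschitzWith.abs_comp_add_sub_le (hf : LipschitzWith K f) {r : ℝ} {w : F}
    (hw : w ∈ closedBall 0 r) (z : F) : |f (z + w) - f z| ≤ K * r := by
  rw [← Real.dist_eq]
  calc dist (f (z + w)) (f z) ≤ K * dist (z + w) z := hf.dist_le_mul _ _
    _ ≤ K * r := by
      rw [dist_eq_norm, add_sub_cancel_left]; gcongr; exact mem_closedBall_zero_iff.1 hw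

variable [MeasurableSpace F] [BorelSpace F] {ν : Measure F}

theorem LipschitzWith.integrable_comp_add [IsFiniteMeasure ν] (hf : LipschitzWith K f) {r : ℝ}
    (hν : ∀ᵐ w ∂ν, w ∈ closedBall (0 : F) r) (z : F) : Integrable (fun w => f (z + w)) ν := by
  refine .of_bound (hf.continuous.comp (continuous_const_add z)).aestronglyMeasurable
    (|f z| + K * r) ?_
  filter_upwards [hν] with w hw
  have := abs_le.1 (hf.abs_comp_add_sub_le hw z)
  rw [Real.norm_eq_abs, abs_le]
  constructor <;> linarith [neg_abs_le (f z), le_abs_self (f z)]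

theorem LipschitzWith.abs_integral_comp_add_sub_le [IsProbabilityMeasure ν]
    (hf : LipschitzWith K f) {r : ℝ} (hν : ∀ᵐ w ∂ν, w ∈ closedBall (0 : F) r) (z : F) :
    |∫ w, f (z + w) ∂ν - f z| ≤ K * r := by
  have hsub : ∫ w, f (z + w) ∂ν - f z = ∫ w, (f (z + w) - f z) ∂ν := by
    rw [integral_sub (hf.integrable_comp_add hν z) (integrable_const _), integral_const]
    simp
  rw [hsub, ← Real.norm_eq_abs]
  simpa using norm_integral_le_of_norm_le_const (f := fun w => f (z + w) - f z)
    (hν.mono fun w hw => by simpa using hf.abs_comp_add_sub_le hw z)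

variable [NormedSpace ℝ F]

theorem LipschitzWith.hasDerivAt_integral_comp_add_smul [IsFiniteMeasure ν]
    (hf : LipschitzWith K f) {x c : F} {t₀ : ℝ} (hint : Integrable (fun w => f (x + t₀ • c + w)) ν)
    (hdiff : ∀ᵐ w ∂ν, DifferentiableAt ℝ f (x + t₀ • c + w)) :
    Integrable (fun w => fderiv ℝ f (x + t₀ • c + w) c) ν ∧
      HasDerivAt (fun t => ∫ w, f (x + t • c + w) ∂ν)
        (∫ w, fderiv ℝ f (x + t₀ • c + w) c ∂ν) t₀ := by
  have hline (w : F) : LipschitzWith (K * ‖c‖₊) (fun t : ℝ => f (x + t • c + w)) := by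
    refine hf.comp (LipschitzWith.of_dist_le_mul fun a b => ?_)
    rw [dist_add_right, dist_add_left, dist_eq_norm, ← sub_smul, norm_smul, dist_eq_norm]
    simp [mul_comm]
  refine hasDerivAt_integral_of_dominated_loc_of_lip (bound := fun _ => K * ‖c‖) univ_mem
    (.of_forall fun t => (hf.continuous.comp (continuous_const_add _)).aestronglyMeasurable) hint
    ((measurable_fderiv_apply_const ℝ f c).comp (measurable_const_add _)).aestronglyMeasurable
    (.of_forall fun w => ?_) (integrable_const _) ?_
  · convert (hline w).lipschitzOnWith
    ext
    simp
  · filter_upwards [hdiff] with w hw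
    have hpath : HasDerivAt (fun t : ℝ => x + t • c + w) c t₀ := by
      simpa using (((hasDerivAt_id t₀).smul_const c).const_add x).add_const w
    exact hw.hasFDerivAt.comp_hasDerivAt t₀ hpath

end Smoothing

section MeanValue

variable {F : Type*} [NormedAddCommGroup F] [NormedSpace ℝ F] [FiniteDimensional ℝ F]
  {f : F → ℝ} {K : ℝ≥0}

theorem LipschitzWith.sub_le_add_of_fderiv_apply_le (hf : LipschitzWith K f) {x c : F} {r B : ℝ}
    (hr : 0 < r) (hB : ∀ y ∈ closedBall x (‖c‖ + r), DifferentiableAt ℝ f y → fderiv ℝ f y c ≤ B) :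
    f (x + c) - f x ≤ B + 2 * K * r := by
  let : MeasurableSpace F := borel F
  have : BorelSpace F := ⟨rfl⟩
  let μ : Measure F := Measure.addHaar
  let ν : Measure F := μ[|closedBall 0 r]
  have : IsProbabilityMeasure ν := cond_isProbabilityMeasure_of_finite
    (measure_closedBall_pos μ 0 hr).ne' measure_closedBall_lt_top.ne
  have hν : ∀ᵐ w ∂ν, w ∈ closedBall (0 : F) r := ae_cond_mem measurableSet_closedBall
  have hdiff (z : F) : ∀ᵐ w ∂ν, DifferentiableAt ℝ f (z + w) :=
    cond_absolutelyContinuous.ae_le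
      ((measurePreserving_add_left μ z).quasiMeasurePreserving.ae hf.ae_differentiableAt)
  have hderiv (t : ℝ) :=
    hf.hasDerivAt_integral_comp_add_smul (hf.integrable_comp_add hν (x + t • c)) (hdiff _)
  have hslope : ∫ w, f (x + (1 : ℝ) • c + w) ∂ν - ∫ w, f (x + (0 : ℝ) • c + w) ∂ν ≤ B := by
    have := (convex_Icc (0 : ℝ) 1).image_sub_le_mul_sub_of_deriv_le
      (f := fun t => ∫ w, f (x + t • c + w) ∂ν) (C := B)
      (fun t _ => (hderiv t).2.continuousAt.continuousWithinAt)
      (fun t _ => (hderiv t).2.differentiableAt.differentiableWithinAt) ?_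
      0 (by simp) 1 (by simp) zero_le_one
    · simpa using this
    intro t ht
    rw [interior_Icc] at ht
    rw [(hderiv t).2.deriv]
    calc ∫ w, fderiv ℝ f (x + t • c + w) c ∂ν ≤ ∫ _, B ∂ν := by
          refine integral_mono_ae (hderiv t).1 (integrable_const B) ?_
          filter_upwards [hν, hdiff (x + t • c)] with w hw hdw
          refine hB _ ?_ hdw
          rw [mem_closedBall, dist_eq_norm, add_assoc, add_sub_cancel_left]
          calc ‖t • c + w‖ ≤ t * ‖c‖ + r := by
                refine (norm_add_le _ _).trans (add_le_add ?_ (mem_closedBall_zero_iff.1 hw))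
                rw [norm_smul, Real.norm_of_nonneg ht.1.le]
            _ ≤ ‖c‖ + r := by gcongr; nlinarith [norm_nonneg c, ht.2]
      _ = B := by simp
  have h0 := abs_le.1 (hf.abs_integral_comp_add_sub_le hν x)
  have h1 := abs_le.1 (hf.abs_integral_comp_add_sub_le hν (x + c))
  simp only [zero_smul, one_smul, add_zero] at hslope
  linarith [h0.1, h1.2]

theorem LipschitzWith.sub_le_of_fderiv_apply_le (hf : LipschitzWith K f) {x c : F} (hc : c ≠ 0)
    {B : ℝ} (hB : ∀ y ∈ closedBall x ‖c‖, DifferentiableAt ℝ f y → fderiv ℝ f y c ≤ B) :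
    f (x + c) - f x ≤ B := by
  have hnear : ∀ t ∈ Ioo (0 : ℝ) 1, f (x + t • c) - f x ≤ t * B + 2 * K * ((1 - t) * ‖c‖) := by
    intro t ht
    refine hf.sub_le_add_of_fderiv_apply_le (mul_pos (sub_pos.2 ht.2) (norm_pos_iff.2 hc))
      fun y hy hdy => ?_
    have hrad : ‖t • c‖ + (1 - t) * ‖c‖ = ‖c‖ := by
      rw [norm_smul, Real.norm_of_nonneg ht.1.le]; ring
    rw [map_smul, smul_eq_mul]
    exact mul_le_mul_of_nonneg_left (hB y (hrad ▸ hy) hdy) ht.1.le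
  have hlhs : Tendsto (fun t : ℝ => f (x + t • c) - f x) (𝓝[<] 1) (𝓝 (f (x + c) - f x)) :=
    have := hf.continuous
    (Continuous.tendsto' (by fun_prop) 1 _ (by simp)).mono_left nhdsWithin_le_nhds
  have hrhs : Tendsto (fun t : ℝ => t * B + 2 * K * ((1 - t) * ‖c‖)) (𝓝[<] 1) (𝓝 B) :=
    (Continuous.tendsto' (by fun_prop) 1 _ (by simp)).mono_left nhdsWithin_le_nhds
  exact le_of_tendsto_of_tendsto hlhs hrhs (eventually_of_mem (Ioo_mem_nhdsLT zero_lt_one) hnear)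

end MeanValue

section Goldstein

variable {f : E → ℝ} {x y : E} {ε : ℝ}

theorem gradient_mem_clarkeSubdiff (hf : DifferentiableAt ℝ f y) :
    gradient f y ∈ clarkeSubdiff f y :=
  subset_closure <| subset_convexHull ℝ _
    ⟨fun _ => y, fun _ => hf, tendsto_const_nhds, tendsto_const_nhds⟩

theorem gradient_mem_goldsteinSubdiff (hy : y ∈ closedBall x ε) (hf : DifferentiableAt ℝ f y) :
    gradient f y ∈ goldsteinSubdiff f x ε :=
  subset_convexHull ℝ _ (mem_biUnion hy (gradient_mem_clarkeSubdiff hf))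

theorem sq_norm_goldsteinGrad_le_inner_gradient (hg : goldsteinGrad f x ε ≠ 0)
    (hy : y ∈ closedBall x ε) (hf : DifferentiableAt ℝ f y) :
    ‖goldsteinGrad f x ε‖ ^ 2 ≤ ⟪goldsteinGrad f x ε, gradient f y⟫ :=
  let ⟨hmem, hmin⟩ := minNorm_mem_and_norm_le hg
  sq_norm_le_inner_of_forall_norm_le (convex_convexHull ℝ _) hmem hmin
    (gradient_mem_goldsteinSubdiff hy hf)

end Goldstein

theorem stmt6_general (f : E → ℝ) (L : ℝ) (hf : LipschitzWith L.toNNReal f)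
    (x : E) (ε : ℝ) (hε : 0 < ε) (hg : goldsteinGrad f x ε ≠ 0) :
    f (x - (ε / ‖goldsteinGrad f x ε‖) • goldsteinGrad f x ε) ≤
      f x - ε * ‖goldsteinGrad f x ε‖ := by
  set g := goldsteinGrad f x ε
  have hg_pos : 0 < ‖g‖ := norm_pos_iff.2 hg
  set d := -((ε / ‖g‖) • g)
  have hd_norm : ‖d‖ = ε := by
    rw [norm_neg, norm_smul, Real.norm_of_nonneg (by positivity), div_mul_cancel₀ _ hg_pos.ne']
  have hd : d ≠ 0 := norm_pos_iff.1 (hd_norm ▸ hε)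
  have hdescent := hf.sub_le_of_fderiv_apply_le hd (B := -(ε * ‖g‖)) fun y hy hdy => by
    have hinner := sq_norm_goldsteinGrad_le_inner_gradient hg (hd_norm ▸ hy) hdy
    have : ε * ‖g‖ ≤ ε / ‖g‖ * ⟪g, gradient f y⟫ := calc
      ε * ‖g‖ = ε / ‖g‖ * ‖g‖ ^ 2 := by field_simp
      _ ≤ ε / ‖g‖ * ⟪g, gradient f y⟫ := by gcongr
    rw [← InnerProductSpace.toDual_symm_apply, ← gradient, inner_neg_right, real_inner_smul_right,
      real_inner_comm]
    linarith
  rw [sub_eq_add_neg x]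
  linarith

theorem stmt6 (f : E → ℝ) (L : ℝ) (hL : 0 ≤ L) (hf : LipschitzWith L.toNNReal f)
    (x : E) (ε : ℝ) (hε : 0 < ε) (hg : goldsteinGrad f x ε ≠ 0) :
    f (x - (ε / ‖goldsteinGrad f x ε‖) • goldsteinGrad f x ε) ≤
      f x - ε * ‖goldsteinGrad f x ε‖ :=
  stmt6_general f L hf x ε hε hg
end
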